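/- The cardinality constrained matroid polytope P^c(E) is full-dimensional (its affine hull is all of ℝ^E) unless m = 2, c_1 = 0, c_2 = r(E), and E is separable; that is, dim P^c(E) = |E| if and only if it is not the case that c = (0, r(E)) and E is separable. -/

import Mathlib

open Finset

/-- A (loopless) matroid on a finite ground set, given by its independent sets. -/
structure FinMatroid (α : Type*) [Fintype α] [DecidableEq α] where
  Indep : Finset α → Prop
  empty_indep : Indep ∅
  subset_indep : ∀ ⦃I J : Finset α⦄, Indep J → I ⊆ J → Indep I
  exchange : ∀ ⦃I J : Finset α⦄, Indep I → Indep J → I.card < J.card →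
    ∃ e ∈ J \ I, Indep (insert e I)
  loopless : ∀ e : α, Indep {e}

variable {α : Type*} [Fintype α] [DecidableEq α]

open Classical in
/-- The rank of a set: the maximum cardinality of an independent subset. -/
noncomputable def FinMatroid.r (M : FinMatroid α) (F : Finset α) : ℕ :=
  (F.powerset.filter M.Indep).sup Finset.card

/-- incidence vector -/
noncomputable def incVec (I : Finset α) : α → ℝ := fun e => if e ∈ I then 1 else 0

/-- x(S) = ∑_{e ∈ S} x_e -/
noncomputable def fsum (x : α → ℝ) (S : Finset α) : ℝ := ∑ e ∈ S, x e

/-- closed set -/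
def FinMatroid.ClosedSet (M : FinMatroid α) (F : Finset α) : Prop :=
  ∀ e ∉ F, M.r F < M.r (insert e F)

/-- F is separable -/
def FinMatroid.Separable (M : FinMatroid α) (F : Finset α) : Prop :=
  ∃ F₁ F₂ : Finset α, F₁ ≠ ∅ ∧ F₂ ≠ ∅ ∧ Disjoint F₁ F₂ ∧ F₁ ∪ F₂ = F ∧
    M.r F₁ + M.r F₂ ≤ M.r F

def FinMatroid.Inseparable (M : FinMatroid α) (F : Finset α) : Prop :=
  ¬ M.Separable F

/-- the k-rank r^k(F) = k - r(E \ F), as an integer -/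
noncomputable def FinMatroid.krank (M : FinMatroid α) (k : ℕ) (F : Finset α) : ℤ :=
  (k : ℤ) - (M.r Fᶜ : ℤ)

/-- F is k-separable -/
noncomputable def FinMatroid.kSeparable (M : FinMatroid α) (k : ℕ) (F : Finset α) : Prop :=
  ∃ F₁ F₂ : Finset α, F₁ ≠ ∅ ∧ F₂ ≠ ∅ ∧ Disjoint F₁ F₂ ∧ F₁ ∪ F₂ = F ∧
    M.krank k F₁ + M.krank k F₂ = M.krank k F

noncomputable def FinMatroid.kInseparable (M : FinMatroid α) (k : ℕ) (F : Finset α) : Prop :=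
  ¬ M.kSeparable k F

/-- convex hull of incidence vectors of independent sets of cardinality exactly k -/
noncomputable def exactPolytope (M : FinMatroid α) (k : ℕ) : Set (α → ℝ) :=
  convexHull ℝ {x | ∃ I : Finset α, M.Indep I ∧ I.card = k ∧ x = incVec I}

/-- the cardinality constrained matroid polytope P^c(E) -/
noncomputable def cardPolytope (M : FinMatroid α) {m : ℕ} (c : Fin m → ℕ) : Set (α → ℝ) :=
  convexHull ℝ {x | ∃ I : Finset α, M.Indep I ∧ (∃ p : Fin m, I.card = c p) ∧ x = incVec I}

/-- dimension of (the affine hull of) a subset of ℝ^E -/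
noncomputable def polyDim (s : Set (α → ℝ)) : ℕ :=
  Module.finrank ℝ (affineSpan ℝ s).direction

/-- `a · x ≤ a₀` defines a facet of `P` -/
noncomputable def IsFacet (P : Set (α → ℝ)) (a : α → ℝ) (a₀ : ℝ) : Prop :=
  (∀ x ∈ P, ∑ e, a e * x e ≤ a₀) ∧
  polyDim {x ∈ P | ∑ e, a e * x e = a₀} + 1 = polyDim P

/-!
Full dimension means that the differences of the vertices span `ℝ^E`. In the exceptional case
every vertex is `0` or a basis, and a separation `E = F₁ ∪ F₂` makes every basis meet `Fᵢ` in
exactly `r(Fᵢ)` elements, so all vertices lie on the hyperplane `r(F₂) x(F₁) = r(F₁) x(F₂)`.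

Otherwise every unit vector `e_g` lies in the span of the differences. Two vertices on one level
that differ by swapping `f` for `g` give `e_f - e_g`, and together with the sum of the `e_f` over a
nonempty set `S` this yields `|S| e_g`. Two distinct levels `k₁ < k₂` with `k₁ ≥ 1`, or the level
`k < r(E)` with `0` as a vertex, leave room for such swaps. In the remaining case `c = (0, r(E))`
the swaps are basis exchanges: the set of `f` with `e_f - e_g` in the span is closed under basis
exchange, hence its rank and that of its complement add up to at most `r(E)`, and inseparability
forces it to be all of `E`.
-/

namespace FinMatroid

variable (M : FinMatroid α)

def IsBase (B : Finset α) : Prop :=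
  M.Indep B ∧ B.card = M.r univ

lemma exists_indep_subset_card_eq_r (F : Finset α) :
    ∃ I ⊆ F, M.Indep I ∧ I.card = M.r F := by
  classical
  obtain ⟨I, hI, hIr⟩ := exists_mem_eq_sup (F.powerset.filter M.Indep)
    ⟨∅, by simp [M.empty_indep]⟩ card
  rw [mem_filter, mem_powerset] at hI
  exact ⟨I, hI.1, hI.2, hIr.symm⟩

variable {M}

lemma card_le_r {I F : Finset α} (hI : M.Indep I) (hIF : I ⊆ F) : I.card ≤ M.r F := by
  classical
  exact le_sup (f := card) (mem_filter.2 ⟨mem_powerset.2 hIF, hI⟩)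

lemma one_le_r {F : Finset α} (hF : F.Nonempty) : 1 ≤ M.r F := by
  obtain ⟨e, he⟩ := hF
  simpa using card_le_r (M.loopless e) (singleton_subset_iff.2 he)

lemma exists_indep_augment {I J : Finset α} (hI : M.Indep I) (hJ : M.Indep J) {k : ℕ}
    (hIk : I.card ≤ k) (hkJ : k ≤ J.card) :
    ∃ Y, I ⊆ Y ∧ Y ⊆ I ∪ J ∧ M.Indep Y ∧ Y.card = k := by
  induction h : k - I.card generalizing I with
  | zero => exact ⟨I, subset_rfl, subset_union_left, hI, by omega⟩
  | succ n ih =>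
    obtain ⟨e, he, heI⟩ := M.exchange hI hJ (by omega)
    obtain ⟨heJ, he⟩ := mem_sdiff.1 he
    obtain ⟨Y, hIY, hYIJ, hY, hYk⟩ :=
      ih heI (by rw [card_insert_of_notMem he]; omega) (by rw [card_insert_of_notMem he]; omega)
    refine ⟨Y, (subset_insert e I).trans hIY, hYIJ.trans ?_, hY, hYk⟩
    exact union_subset (insert_subset (mem_union_right _ heJ) subset_union_left) subset_union_right

lemma exists_indep_superset_card_eq {I : Finset α} (hI : M.Indep I) {k : ℕ} (hIk : I.card ≤ k)
    (hk : k ≤ M.r univ) : ∃ J, I ⊆ J ∧ M.Indep J ∧ J.card = k := by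
  obtain ⟨B, -, hB, hBr⟩ := M.exists_indep_subset_card_eq_r univ
  obtain ⟨J, hIJ, -, hJ, hJk⟩ := exists_indep_augment hI hB hIk (hBr ▸ hk)
  exact ⟨J, hIJ, hJ, hJk⟩

lemma exists_isBase_insert_erase {B X : Finset α} {e : α} (hB : M.IsBase B) (he : e ∉ B)
    (hXB : X ⊆ B) (hX : M.Indep (insert e X)) :
    ∃ f ∈ B \ X, M.IsBase ((insert e B).erase f) := by
  obtain ⟨Y, hXY, hY, hYind, hYcard⟩ := exists_indep_augment hX hB.1
    (card_le_r hX (subset_univ _) |>.trans hB.2.ge) le_rfl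
  have hYeB : Y ⊆ insert e B :=
    hY.trans (union_subset (insert_subset_insert e hXB) (subset_insert e B))
  obtain ⟨f, hf⟩ : ∃ f, insert e B \ Y = {f} := card_eq_one.1 (by
    rw [card_sdiff_of_subset hYeB, card_insert_of_notMem he]; omega)
  have hfY : f ∉ Y := (mem_sdiff.1 (hf ▸ mem_singleton_self f)).2
  have hfB : f ∈ B := by
    have := (mem_sdiff.1 (hf ▸ mem_singleton_self f)).1
    rcases mem_insert.1 this with rfl | h
    · exact absurd (hXY (mem_insert_self _ _)) hfY
    · exact h
  refine ⟨f, mem_sdiff.2 ⟨hfB, fun hfX => hfY (hXY (mem_insert_of_mem hfX))⟩, ?_⟩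
  rw [← sdiff_singleton_eq_erase, ← hf, Finset.sdiff_sdiff_eq_self hYeB]
  exact ⟨hYind, hYcard.trans hB.2⟩

lemma r_add_r_compl_le_of_exchange_closed (F : Finset α)
    (hF : ∀ ⦃B e f⦄, M.IsBase B → e ∉ B → f ∈ B → f ∈ F → M.IsBase ((insert e B).erase f) →
      e ∈ F) :
    M.r F + M.r Fᶜ ≤ M.r univ := by
  obtain ⟨I₁, hI₁F, hI₁, hI₁r⟩ := M.exists_indep_subset_card_eq_r F
  obtain ⟨B, hI₁B, hB, hBr⟩ :=
    exists_indep_superset_card_eq hI₁ (card_le_r hI₁ (subset_univ _)) le_rfl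
  obtain ⟨I₂, hI₂F, hI₂, hI₂r⟩ := M.exists_indep_subset_card_eq_r Fᶜ
  have hBF : M.r F ≤ (B ∩ F).card := hI₁r ▸ card_le_card (subset_inter hI₁B hI₁F)
  have hBFc : M.r Fᶜ ≤ (B \ F).card := by
    by_contra! hlt
    obtain ⟨e, he, heX⟩ := M.exchange (M.subset_indep hB sdiff_subset) hI₂ (hI₂r ▸ hlt)
    obtain ⟨heI₂, heBF⟩ := mem_sdiff.1 he
    have heF : e ∉ F := mem_compl.1 (hI₂F heI₂)
    have heB : e ∉ B := fun h => heBF (mem_sdiff.2 ⟨h, heF⟩)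
    obtain ⟨f, hf, hfB⟩ := exists_isBase_insert_erase ⟨hB, hBr⟩ heB sdiff_subset heX
    rw [sdiff_sdiff_self_left, mem_inter] at hf
    exact heF (hF ⟨hB, hBr⟩ heB hf.1 hf.2 hfB)
  have hpart := card_inter_add_card_sdiff B F
  omega

lemma card_inter_eq_r_of_separation {F₁ F₂ : Finset α} (hdisj : Disjoint F₁ F₂)
    (hunion : F₁ ∪ F₂ = univ) (hsep : M.r F₁ + M.r F₂ ≤ M.r univ) {B : Finset α}
    (hB : M.IsBase B) : (F₁ ∩ B).card = M.r F₁ := by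
  have h₁ := card_le_r (M.subset_indep hB.1 inter_subset_right) (inter_subset_left (s₁ := F₁))
  have h₂ := card_le_r (M.subset_indep hB.1 inter_subset_right) (inter_subset_left (s₁ := F₂))
  have hpart : (F₁ ∩ B).card + (F₂ ∩ B).card = B.card := by
    rw [← card_union_of_disjoint (hdisj.mono inter_subset_left inter_subset_left),
      ← union_inter_distrib_right, hunion, univ_inter]
  have := hB.2
  omega

end FinMatroid

section IncVec

variable {ι : Type*} [DecidableEq ι]

lemma incVec_eq_sum (I : Finset ι) : incVec I = ∑ f ∈ I, Pi.single f (1 : ℝ) := by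
  ext a
  simp [incVec, Finset.sum_apply, Pi.single_apply]

@[simp]
lemma incVec_empty : incVec (∅ : Finset ι) = 0 := by
  ext a
  simp [incVec]

lemma incVec_insert {I : Finset ι} {e : ι} (he : e ∉ I) :
    incVec (insert e I) = incVec I + Pi.single e 1 := by
  rw [incVec_eq_sum, incVec_eq_sum, sum_insert he, add_comm]

lemma incVec_erase {I : Finset ι} {f : ι} (hf : f ∈ I) :
    incVec (I.erase f) = incVec I - Pi.single f 1 := by
  rw [incVec_eq_sum, incVec_eq_sum, ← sum_erase_add I _ hf, add_sub_cancel_right]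

lemma incVec_sdiff {I J : Finset ι} (h : I ⊆ J) : incVec (J \ I) = incVec J - incVec I := by
  rw [incVec_eq_sum, incVec_eq_sum, incVec_eq_sum, sum_sdiff_eq_sub h]

lemma sum_incVec (I F : Finset ι) : ∑ e ∈ F, incVec I e = ((F ∩ I).card : ℝ) := by
  simp [incVec]

lemma Submodule.single_mem_of_sum_mem (D : Submodule ℝ (ι → ℝ)) {S : Finset ι} (hS : S.Nonempty)
    (hSD : incVec S ∈ D) {g : ι} (hdiff : ∀ f ∈ S, Pi.single f (1 : ℝ) - Pi.single g 1 ∈ D) :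
    Pi.single g (1 : ℝ) ∈ D := by
  have hsum := D.sub_mem hSD (D.sum_mem hdiff)
  rw [sum_sub_distrib, ← incVec_eq_sum, sum_const, sub_sub_cancel,
    ← Nat.cast_smul_eq_nsmul ℝ] at hsum
  exact (D.smul_mem_iff (by exact_mod_cast hS.card_pos.ne')).1 hsum

end IncVec

lemma Submodule.eq_top_of_forall_single_mem (D : Submodule ℝ (α → ℝ))
    (h : ∀ g : α, Pi.single g (1 : ℝ) ∈ D) : D = ⊤ := by
  rw [eq_top_iff, ← (Pi.basisFun ℝ α).span_eq, span_le]
  rintro _ ⟨g, rfl⟩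
  simpa using h g

lemma polyDim_convexHull_eq_card_iff {ι : Type*} [Fintype ι] (V : Set (ι → ℝ)) :
    polyDim (convexHull ℝ V) = Fintype.card ι ↔ vectorSpan ℝ V = ⊤ := by
  rw [polyDim, affineSpan_convexHull, direction_affineSpan,
    ← Module.finrank_fintype_fun_eq_card ℝ]
  exact ⟨Submodule.eq_top_of_finrank_eq, fun h => h ▸ finrank_top ℝ _⟩

namespace FinMatroid

variable {M : FinMatroid α} {D : Submodule ℝ (α → ℝ)}

lemma single_sub_single_mem {k : ℕ} (hk : 1 ≤ k)
    (hD : ∀ I I', M.Indep I → I.card = k → M.Indep I' → I'.card = k → incVec I - incVec I' ∈ D)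
    {K : Finset α} (hK : M.Indep K) (hkK : k < K.card) {f g : α} (hf : f ∈ K) (hg : g ∈ K) :
    Pi.single f (1 : ℝ) - Pi.single g 1 ∈ D := by
  rcases eq_or_ne f g with rfl | hfg
  · simp
  obtain ⟨T, hT, hTk⟩ := exists_subset_card_eq (s := (K.erase f).erase g) (n := k - 1) (by
    rw [card_erase_of_mem (mem_erase.2 ⟨hfg.symm, hg⟩), card_erase_of_mem hf]; omega)
  have hfT : f ∉ T := fun h => (mem_erase.1 (mem_erase.1 (hT h)).2).1 rfl
  have hgT : g ∉ T := fun h => (mem_erase.1 (hT h)).1 rfl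
  have hTK : T ⊆ K := hT.trans ((erase_subset _ _).trans (erase_subset _ _))
  have h := hD (insert f T) (insert g T) (M.subset_indep hK (insert_subset hf hTK))
    (by rw [card_insert_of_notMem hfT]; omega) (M.subset_indep hK (insert_subset hg hTK))
    (by rw [card_insert_of_notMem hgT]; omega)
  rwa [incVec_insert hfT, incVec_insert hgT, add_sub_add_left_eq_sub] at h

lemma single_mem_of_levels {k₁ k₂ : ℕ} (hk₁ : 1 ≤ k₁) (hk : k₁ < k₂) (hk₂ : k₂ ≤ M.r univ)
    (hD : ∀ I J, M.Indep I → I.card = k₁ → M.Indep J → J.card = k₂ → incVec J - incVec I ∈ D)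
    (g : α) : Pi.single g (1 : ℝ) ∈ D := by
  obtain ⟨K, hgK, hK, hKk⟩ :=
    exists_indep_superset_card_eq (M.loopless g) (by rw [card_singleton]; omega) hk₂
  obtain ⟨I₀, hI₀K, hI₀k⟩ := exists_subset_card_eq (s := K) (n := k₁) (by omega)
  have hlevel : ∀ I I', M.Indep I → I.card = k₁ → M.Indep I' → I'.card = k₁ →
      incVec I - incVec I' ∈ D := fun I I' hI hIk hI' hI'k => by
    simpa using D.sub_mem (hD I' K hI' hI'k hK hKk) (hD I K hI hIk hK hKk)
  refine D.single_mem_of_sum_mem (S := K \ I₀) (card_pos.1 ?_) ?_ fun f hf =>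
    single_sub_single_mem hk₁ hlevel hK (by omega) (mem_sdiff.1 hf).1 (hgK (mem_singleton_self g))
  · rw [card_sdiff_of_subset hI₀K]; omega
  · rw [incVec_sdiff hI₀K]
    exact hD I₀ K (M.subset_indep hK hI₀K) hI₀k hK hKk

lemma single_mem_of_level {k : ℕ} (hk : 1 ≤ k) (hkr : k < M.r univ)
    (hD : ∀ I, M.Indep I → I.card = k → incVec I ∈ D) (g : α) : Pi.single g (1 : ℝ) ∈ D := by
  obtain ⟨J, hgJ, hJ, hJk⟩ :=
    exists_indep_superset_card_eq (M.loopless g) (k := k + 1) (by rw [card_singleton]; omega) hkr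
  have hg : g ∈ J := hgJ (mem_singleton_self g)
  have hJg : (J.erase g).card = k := by rw [card_erase_of_mem hg]; omega
  refine D.single_mem_of_sum_mem (card_pos.1 (by omega))
    (hD _ (M.subset_indep hJ (erase_subset g J)) hJg) fun f hf =>
    single_sub_single_mem hk (fun I I' hI hIk hI' hI'k => D.sub_mem (hD I hI hIk) (hD I' hI' hI'k))
      hJ (by omega) (mem_of_mem_erase hf) hg

lemma single_mem_of_inseparable (hins : M.Inseparable univ)
    (hD : ∀ B, M.IsBase B → incVec B ∈ D) (g : α) : Pi.single g (1 : ℝ) ∈ D := by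
  classical
  set F := univ.filter fun f => Pi.single f (1 : ℝ) - Pi.single g 1 ∈ D
  have hFc : Fᶜ = ∅ := by
    by_contra hne
    refine hins ⟨F, Fᶜ, ne_empty_of_mem (a := g) (by simp [F]), hne, disjoint_compl_right,
      union_compl F, r_add_r_compl_le_of_exchange_closed F fun B e f hB he hf hfF hB' => ?_⟩
    have hef : incVec ((insert e B).erase f) - incVec B = Pi.single e 1 - Pi.single f 1 := by
      rw [incVec_erase (mem_insert_of_mem hf), incVec_insert he]
      abel
    simp only [F, mem_filter, mem_univ, true_and] at hfF ⊢
    simpa [hef] using D.add_mem (D.sub_mem (hD _ hB') (hD _ hB)) hfF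
  obtain ⟨B, -, hB, hBr⟩ := M.exists_indep_subset_card_eq_r univ
  refine D.single_mem_of_sum_mem (card_pos.1 (hBr ▸ one_le_r ⟨g, mem_univ g⟩))
    (hD B ⟨hB, hBr⟩) fun f _ => ?_
  have hf : f ∈ F := by simp [(compl_eq_empty_iff F).1 hFc]
  simpa [F] using hf

lemma vectorSpan_ne_top_of_separable (hsep : M.Separable univ) {V : Set (α → ℝ)}
    (hV : ∀ x ∈ V, ∃ I, M.Indep I ∧ (I.card = 0 ∨ I.card = M.r univ) ∧ x = incVec I) :
    vectorSpan ℝ V ≠ ⊤ := by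
  obtain ⟨F₁, F₂, hF₁, hF₂, hdisj, hunion, hr⟩ := hsep
  obtain ⟨e₀, he₀⟩ := nonempty_iff_ne_empty.2 hF₁
  set φ : (α → ℝ) →ₗ[ℝ] ℝ :=
    (M.r F₂ : ℝ) • ∑ e ∈ F₁, LinearMap.proj e - (M.r F₁ : ℝ) • ∑ e ∈ F₂, LinearMap.proj e
  have hφ (x : α → ℝ) : φ x = M.r F₂ * ∑ e ∈ F₁, x e - M.r F₁ * ∑ e ∈ F₂, x e := by simp [φ]
  have hV0 : ∀ x ∈ V, φ x = 0 := by
    intro x hx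
    obtain ⟨I, hI, hIc | hIc, rfl⟩ := hV x hx
    · obtain rfl := card_eq_zero.1 hIc
      simp
    · rw [hφ, sum_incVec, sum_incVec,
        card_inter_eq_r_of_separation hdisj hunion hr ⟨hI, hIc⟩,
        card_inter_eq_r_of_separation hdisj.symm (union_comm F₁ F₂ ▸ hunion) (by omega) ⟨hI, hIc⟩]
      ring
  have hle : vectorSpan ℝ V ≤ LinearMap.ker φ := by
    rw [vectorSpan_def, Submodule.span_le]
    rintro _ ⟨v, hv, w, hw, rfl⟩
    simp [hV0 v hv, hV0 w hw]
  have hφe₀ : φ (Pi.single e₀ 1) ≠ 0 := by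
    have := one_le_r (M := M) (nonempty_iff_ne_empty.2 hF₂)
    simp [hφ, he₀, disjoint_left.1 hdisj he₀]
    omega
  intro htop
  exact hφe₀ (hle (htop ▸ Submodule.mem_top))

end FinMatroid

/-- P^c(E) is full-dimensional unless c = (0, r(E)) and E is
separable. -/
theorem cardPolytope_fulldim_iff {α : Type*} [Fintype α] [DecidableEq α]
    (M : FinMatroid α)
    {m : ℕ} (c : Fin m → ℕ) (hm : 2 ≤ m) (hmono : StrictMono c)
    (hlast : c ⟨m - 1, by omega⟩ ≤ M.r Finset.univ) :
    polyDim (cardPolytope M c) = Fintype.card α ↔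
      ¬ (m = 2 ∧ c ⟨0, by omega⟩ = 0 ∧ c ⟨m - 1, by omega⟩ = M.r Finset.univ ∧
        M.Separable Finset.univ) := by
  set V := {x | ∃ I : Finset α, M.Indep I ∧ (∃ p : Fin m, I.card = c p) ∧ x = incVec I}
  have hdiff (p q : Fin m) (I J : Finset α) (hI : M.Indep I) (hIc : I.card = c p)
      (hJ : M.Indep J) (hJc : J.card = c q) : incVec J - incVec I ∈ vectorSpan ℝ V :=
    vsub_mem_vectorSpan ℝ ⟨J, hJ, ⟨q, hJc⟩, rfl⟩ ⟨I, hI, ⟨p, hIc⟩, rfl⟩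
  have hc (p q : ℕ) (hpq : p < q) (hq : q < m) : c ⟨p, by omega⟩ < c ⟨q, hq⟩ :=
    hmono (Fin.mk_lt_mk.2 hpq)
  have hcr (p : ℕ) (hp : p < m) : c ⟨p, hp⟩ ≤ M.r univ :=
    (hmono.monotone (Fin.mk_le_mk.2 (by omega))).trans hlast
  rw [cardPolytope, polyDim_convexHull_eq_card_iff]
  constructor
  · rintro htop ⟨rfl, h0, hr, hsep⟩
    refine M.vectorSpan_ne_top_of_separable hsep ?_ htop
    rintro x ⟨I, hI, ⟨p, hp⟩, hx⟩
    refine ⟨I, hI, ?_, hx⟩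
    fin_cases p
    exacts [.inl (hp.trans h0), .inr (hp.trans hr)]
  intro hne
  refine Submodule.eq_top_of_forall_single_mem _ fun g => ?_
  by_cases h0 : c ⟨0, by omega⟩ = 0
  · have hlevel (p : Fin m) (I : Finset α) (hI : M.Indep I) (hIc : I.card = c p) :
        incVec I ∈ vectorSpan ℝ V := by
      simpa using hdiff ⟨0, by omega⟩ p ∅ I M.empty_indep (by simp [h0]) hI hIc
    rcases (show m = 2 ∨ 3 ≤ m by omega) with rfl | hm3
    · have hc1 := hc 0 1 one_pos one_lt_two
      by_cases hr : c ⟨1, one_lt_two⟩ = M.r univ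
      · exact FinMatroid.single_mem_of_inseparable (fun hsep => hne ⟨rfl, h0, hr, hsep⟩)
          (fun B hB => hlevel _ B hB.1 (hB.2.trans hr.symm)) g
      · exact FinMatroid.single_mem_of_level (k := c ⟨1, one_lt_two⟩) (by omega)
          (lt_of_le_of_ne hlast hr) (hlevel _) g
    · have hc1 := hc 0 1 one_pos (by omega)
      exact FinMatroid.single_mem_of_levels (by omega) (hc 1 2 one_lt_two hm3)
        (hcr 2 hm3) (hdiff _ _) g
  · exact FinMatroid.single_mem_of_levels (by omega) (hc 0 1 (by omega) (by omega)) (hcr 1 hm)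
      (hdiff _ _) g
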